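/- Let G be a group, M ⊆ G a submonoid, and n a positive integer such that the n-fold alternating product M·M⁻¹·…·M^{(−1)^{n−1}} equals G but the (n−1)-fold initial product does not. Define X_i to be the i-fold alternating product minus the (i−1)-fold one (with X₁ = M). Then X_i is nonempty for 1 ≤ i ≤ n and empty for i > n. -/
import Mathlib


open Pointwise

/-- The `m`-fold alternating elementwise product `M · M⁻¹ · M · … · M^{(−1)^{m−1}}`
of a subset `M` of a group (with `altProd M 0 = {1}`). -/
def altProd {G : Type*} [Group G] (M : Set G) : ℕ → Set G
  | 0 => {1}
  | m + 1 => altProd M m * (if Even m then M else M⁻¹)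

/-- `X_i` is the `i`-fold alternating product minus the `(i−1)`-fold one, except `X₁ = M`. -/
def layer {G : Type*} [Group G] (M : Set G) (i : ℕ) : Set G :=
  if i = 1 then M else altProd M i \ altProd M (i - 1)

section Aux

variable {G : Type*} [Group G] (M : Submonoid G)

lemma one_mem_brac (m : ℕ) :
    (1 : G) ∈ (if Even m then (M : Set G) else (M : Set G)⁻¹) := by
  split <;> simp [M.one_mem]

lemma brac_mul_self (m : ℕ) :
    (if Even m then (M : Set G) else (M : Set G)⁻¹) *
      (if Even m then (M : Set G) else (M : Set G)⁻¹) =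
      (if Even m then (M : Set G) else (M : Set G)⁻¹) := by
  apply Set.Subset.antisymm
  · split
    · rintro x ⟨a, ha, b, hb, rfl⟩
      exact M.mul_mem ha hb
    · rintro x ⟨a, ha, b, hb, rfl⟩
      simp only [Set.mem_inv] at *
      rw [mul_inv_rev]
      exact M.mul_mem hb ha
  · intro x hx
    have := Set.mul_mem_mul hx (one_mem_brac M m)
    simpa using this

lemma altProd_subset_succ (m : ℕ) :
    altProd (M : Set G) m ⊆ altProd (M : Set G) (m + 1) := by
  intro x hx
  have := Set.mul_mem_mul hx (one_mem_brac M m)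
  rw [altProd]
  simpa using this

lemma altProd_mono {m k : ℕ} (h : m ≤ k) :
    altProd (M : Set G) m ⊆ altProd (M : Set G) k := by
  induction h with
  | refl => exact subset_rfl
  | step _ ih => exact ih.trans (altProd_subset_succ M _)

lemma altProd_stab (m : ℕ)
    (h : altProd (M : Set G) (m + 1) = altProd (M : Set G) m) :
    altProd (M : Set G) (m + 2) = altProd (M : Set G) (m + 1) := by
  match m with
  | 0 =>
    have hM : (M : Set G) = {1} := by
      have h1 : altProd (M : Set G) 1 = (M : Set G) := by
        rw [altProd, altProd]
        simp
      rw [h1] at h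
      rw [h]
      rfl
    rw [show (2 : ℕ) = 1 + 1 from rfl, altProd, h]
    rw [altProd, hM]
    simp
  | k + 1 =>
    have hB : (if Even (k + 2) then (M : Set G) else (M : Set G)⁻¹)
        = (if Even k then (M : Set G) else (M : Set G)⁻¹) := by
      have : Even (k + 2) ↔ Even k := by
        simp [Nat.even_add_one, not_not]
      rw [if_congr this rfl rfl]
    have e3 : altProd (M : Set G) (k + 3)
        = altProd (M : Set G) (k + 2) * (if Even k then (M : Set G) else (M : Set G)⁻¹) := by
      rw [show k + 3 = (k + 2) + 1 from rfl, altProd, hB]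
    show altProd (M : Set G) (k + 3) = altProd (M : Set G) (k + 2)
    rw [e3, h]
    conv_lhs => rw [altProd]
    rw [mul_assoc, brac_mul_self]
    conv_rhs => rw [altProd]

lemma altProd_stab' (m : ℕ)
    (h : altProd (M : Set G) (m + 1) = altProd (M : Set G) m) :
    ∀ k, altProd (M : Set G) (m + k + 1) = altProd (M : Set G) (m + k) := by
  intro k
  induction k with
  | zero => simpa using h
  | succ k ih =>
    have := altProd_stab M (m + k) ih
    have e1 : m + (k + 1) + 1 = (m + k) + 2 := by ring
    have e2 : m + (k + 1) = (m + k) + 1 := by ring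
    rw [e1, e2]
    exact this

lemma altProd_stab_ge (m : ℕ)
    (h : altProd (M : Set G) (m + 1) = altProd (M : Set G) m)
    {k : ℕ} (hk : m ≤ k) :
    altProd (M : Set G) k = altProd (M : Set G) m := by
  obtain ⟨j, rfl⟩ := Nat.exists_eq_add_of_le hk
  induction j with
  | zero => rfl
  | succ j ih =>
    have := altProd_stab' M m h j
    rw [show m + (j + 1) = m + j + 1 from rfl, this]
    exact ih (by omega)

end Aux

/-- If the `n`-fold alternating product `M · M⁻¹ · …` equals `G` but the `(n−1)`-fold one
does not, then the layers `X_i` are nonempty for `1 ≤ i ≤ n` and empty for `i > n`. -/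
theorem layer_nonempty_iff {G : Type*} [Group G] (M : Submonoid G) (n : ℕ) (hn : 0 < n)
    (htop : altProd (M : Set G) n = Set.univ)
    (hne : altProd (M : Set G) (n - 1) ≠ Set.univ) :
    (∀ i : ℕ, 1 ≤ i → i ≤ n → (layer (M : Set G) i).Nonempty) ∧
      ∀ i : ℕ, n < i → layer (M : Set G) i = ∅ := by
  constructor
  · intro i h1 hin
    rcases eq_or_lt_of_le h1 with h1 | h1
    · rw [layer, if_pos h1.symm]
      exact ⟨1, M.one_mem⟩
    · -- i ≥ 2
      rw [layer, if_neg (by omega)]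
      by_contra hemp
      rw [Set.not_nonempty_iff_eq_empty, Set.diff_eq_empty] at hemp
      have heq : altProd (M : Set G) ((i - 1) + 1) = altProd (M : Set G) (i - 1) := by
        rw [show i - 1 + 1 = i by omega]
        exact hemp.antisymm (altProd_mono M (by omega))
      have h1' : altProd (M : Set G) (n - 1) = altProd (M : Set G) (i - 1) :=
        altProd_stab_ge M (i - 1) heq (by omega)
      have h2' : altProd (M : Set G) n = altProd (M : Set G) (i - 1) :=
        altProd_stab_ge M (i - 1) heq (by omega)
      exact hne (by rw [h1', ← h2', htop])
  · intro i hi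
    have h1 : altProd (M : Set G) (i - 1) = Set.univ :=
      Set.eq_univ_of_univ_subset (htop ▸ altProd_mono M (by omega))
    have h2 : altProd (M : Set G) i = Set.univ :=
      Set.eq_univ_of_univ_subset (htop ▸ altProd_mono M (by omega))
    rw [layer, if_neg (by omega), h1, h2, Set.diff_self]
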